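/- arXiv:2111.06789 — 2 statements merged into one kernel-verified Lean document; each statement's English description precedes it below -/
import Mathlib

section
/- Let 𝔼 be a finite-dimensional Banach space and N : [0,1] × 𝔼 → [0,∞) a continuous function such that N_t := N(t,·) is a norm on 𝔼 for each t. Then for every u ∈ L^∞([0,1]; 𝔼), ess sup_{t∈[0,1]} N_t(u(t)) = sup{ ∫₀¹ ⟨w(t)|u(t)⟩ dt : w ∈ L¹([0,1]; 𝔼*), ∫₀¹ N_t*(w(t)) dt ≤ 1 }. -/
/-!
Pointwise `x v ≤ N_t*(x) N_t(v)`, so integrating against an admissible `w` gives at most the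
essential supremum. Conversely, pick a point `t₀` where `N_{t₀}(u t₀)` is almost the essential
supremum and a Hahn–Banach functional norming `u t₀` for `N_{t₀}`; spread evenly over a set of
positive measure on which `(t, u t)` barely moves, it nearly attains the supremum, because `N` is
uniformly continuous and uniformly equivalent to `‖·‖` over the compact parameter set.
Measurability of `t ↦ N_t*(w t)` comes from writing the dual norm as a supremum over a countable
dense set.
-/

open MeasureTheory Set Filter Topology

lemma exists_measurableSet_measure_ne_zero_forall_dist_lt {α X : Type*} [MeasurableSpace α]
    [PseudoMetricSpace X] [SecondCountableTopology X] [MeasurableSpace X] [OpensMeasurableSpace X]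
    {μ : Measure α} [NeZero μ] {f : α → X} (hf : Measurable f) {r : ℝ} (hr : 0 < r) :
    ∃ B, MeasurableSet B ∧ μ B ≠ 0 ∧ ∀ s ∈ B, ∀ t ∈ B, dist (f s) (f t) < r := by
  obtain ⟨x, -, hx⟩ := exists_mem_forall_mem_nhdsWithin_pos_measure (μ := μ.map f) (s := univ)
    (by simp [Measure.map_apply hf MeasurableSet.univ, NeZero.ne μ])
  have hball := hx _ (by simpa using Metric.ball_mem_nhds x (half_pos hr))
  rw [Measure.map_apply hf measurableSet_ball] at hball
  refine ⟨f ⁻¹' Metric.ball x (r / 2), hf measurableSet_ball, hball.ne', fun s hs t ht ↦ ?_⟩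
  calc dist (f s) (f t) ≤ dist (f s) x + dist (f t) x := dist_triangle_right _ _ _
    _ < r / 2 + r / 2 := add_lt_add hs ht
    _ = r := add_halves r

section

variable {E : Type*} [NormedAddCommGroup E] [NormedSpace ℝ E]

/-- When the set is unbounded, `sSup` returns the junk value `0`; the lemmas below therefore
assume `c * ‖v‖ ≤ p v` with `0 < c`. -/
noncomputable def dualNorm (p : E → ℝ) (x : E →L[ℝ] ℝ) : ℝ :=
  sSup {a : ℝ | ∃ v, p v ≤ 1 ∧ a = x v}

section DualNorm

variable {p : Seminorm ℝ E} {x : E →L[ℝ] ℝ} {c : ℝ}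

lemma zero_mem_dualNorm_set : (0 : ℝ) ∈ {a : ℝ | ∃ v, p v ≤ 1 ∧ a = x v} :=
  ⟨0, by simp, by simp⟩

lemma dualNorm_nonneg : 0 ≤ dualNorm p x :=
  Real.sSup_nonneg' ⟨0, zero_mem_dualNorm_set, le_rfl⟩

lemma dualNorm_le_of_forall {b : ℝ} (h : ∀ v, p v ≤ 1 → x v ≤ b) : dualNorm p x ≤ b :=
  csSup_le ⟨0, zero_mem_dualNorm_set⟩ (by rintro _ ⟨v, hv, rfl⟩; exact h v hv)

lemma apply_le_norm_div (hc : 0 < c) (hp : ∀ v, c * ‖v‖ ≤ p v) {v : E} (hv : p v ≤ 1) :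
    x v ≤ ‖x‖ / c :=
  calc x v ≤ ‖x‖ * ‖v‖ := (le_abs_self _).trans (x.le_opNorm v)
    _ ≤ ‖x‖ * (1 / c) := by
      gcongr
      rw [le_div_iff₀ hc, mul_comm]
      exact (hp v).trans hv
    _ = ‖x‖ / c := by ring

lemma dualNorm_le_norm_div (hc : 0 < c) (hp : ∀ v, c * ‖v‖ ≤ p v) : dualNorm p x ≤ ‖x‖ / c :=
  dualNorm_le_of_forall fun _ ↦ apply_le_norm_div hc hp

lemma le_dualNorm (hc : 0 < c) (hp : ∀ v, c * ‖v‖ ≤ p v) {v : E} (hv : p v ≤ 1) :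
    x v ≤ dualNorm p x :=
  le_csSup ⟨‖x‖ / c, by rintro _ ⟨w, hw, rfl⟩; exact apply_le_norm_div hc hp hw⟩ ⟨v, hv, rfl⟩

lemma apply_le_dualNorm_mul (hc : 0 < c) (hp : ∀ v, c * ‖v‖ ≤ p v) (v : E) :
    x v ≤ dualNorm p x * p v := by
  rcases (apply_nonneg p v).eq_or_lt with hv | hv
  · have : v = 0 := norm_eq_zero.1 <| le_antisymm
      (nonpos_of_mul_nonpos_right (hv ▸ hp v) hc) (norm_nonneg v)
    simp [this]
  · have hunit : p ((p v)⁻¹ • v) ≤ 1 := by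
      rw [map_smul_eq_mul, Real.norm_of_nonneg (inv_nonneg.2 hv.le), inv_mul_cancel₀ hv.ne']
    have := le_dualNorm (x := x) hc hp hunit
    rwa [map_smul, smul_eq_mul, inv_mul_le_iff₀ hv, mul_comm] at this

lemma dualNorm_eq_iSup (hc : 0 < c) (hp : ∀ v, c * ‖v‖ ≤ p v) (hpc : Continuous p)
    {vs : ℕ → E} (hvs : DenseRange vs) :
    dualNorm p x = ⨆ n, x ((max (p (vs n)) 1)⁻¹ • vs n) := by
  -- `v ↦ (max (p v) 1)⁻¹ • v` is a continuous retraction of `E` onto the unit ball of `p`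
  set φ : E → ℝ := fun v ↦ x ((max (p v) 1)⁻¹ • v)
  have hφ_unit (v : E) : p ((max (p v) 1)⁻¹ • v) ≤ 1 := by
    have h1 : 0 < max (p v) 1 := lt_max_of_lt_right one_pos
    rw [map_smul_eq_mul, Real.norm_of_nonneg (inv_nonneg.2 h1.le), inv_mul_le_one₀ h1]
    exact le_max_left _ _
  have hφ_le (v : E) : φ v ≤ dualNorm p x := le_dualNorm hc hp (hφ_unit v)
  have hbdd : BddAbove (range (φ ∘ vs)) := ⟨dualNorm p x, by rintro _ ⟨n, rfl⟩; exact hφ_le _⟩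
  refine le_antisymm (dualNorm_le_of_forall fun v hv ↦ ?_) (ciSup_le fun n ↦ hφ_le _)
  have hφc : Continuous φ := x.continuous.comp <|
    ((hpc.max continuous_const).inv₀ fun v ↦ (lt_max_of_lt_right one_pos).ne').smul continuous_id
  have hclosed : IsClosed {v | φ v ≤ ⨆ n, φ (vs n)} := isClosed_le hφc continuous_const
  have := hclosed.closure_subset_iff.2 (by rintro _ ⟨n, rfl⟩; exact le_ciSup hbdd n) (hvs v)
  simpa [φ, max_eq_right hv] using this

end DualNorm

lemma Seminorm.exists_dual_le_and_apply_eq [FiniteDimensional ℝ E] (p : Seminorm ℝ E) (v₀ : E) :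
    ∃ x : E →L[ℝ] ℝ, x v₀ = p v₀ ∧ ∀ v, x v ≤ p v := by
  rcases eq_or_ne v₀ 0 with rfl | hv₀
  · exact ⟨0, by simp, fun v ↦ by simp⟩
  set f : E →ₗ.[ℝ] ℝ := LinearPMap.mkSpanSingleton v₀ (p v₀) hv₀
  obtain ⟨g, hgf, hgp⟩ := Module.Dual.exists_extension_of_le_seminorm_real f.domain f.toFun
    (p := p) <| by
      rintro ⟨_, hv⟩
      obtain ⟨a, rfl⟩ := Submodule.mem_span_singleton.1 hv
      change f ⟨a • v₀, hv⟩ ≤ p (a • v₀)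
      rw [LinearPMap.mkSpanSingleton'_apply, map_smul_eq_mul, Real.norm_eq_abs, smul_eq_mul]
      exact mul_le_mul_of_nonneg_right (le_abs_self a) (apply_nonneg p v₀)
  refine ⟨LinearMap.toContinuousLinearMap g, ?_, fun v ↦ (le_abs_self _).trans (hgp v)⟩
  exact (hgf ⟨v₀, Submodule.mem_span_singleton_self v₀⟩).trans
    (LinearPMap.mkSpanSingleton_apply ℝ ℝ hv₀ (p v₀))

lemma exists_integral_dualNorm_le_one {p : ℝ → Seminorm ℝ E} {μ : Measure ℝ} [IsFiniteMeasure μ]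
    {u : ℝ → E} (hu : MemLp u ⊤ μ) {B : Set ℝ} (hB : MeasurableSet B) (hμB : μ B ≠ 0)
    {x : E →L[ℝ] ℝ} {β b : ℝ} (hβ : 0 < β)
    (hx : ∀ᵐ t ∂μ, t ∈ B → (∀ v, p t v ≤ 1 → x v ≤ β) ∧ b ≤ x (u t)) :
    ∃ w : ℝ → E →L[ℝ] ℝ, Integrable w μ ∧ ∫ t, dualNorm (p t) (w t) ∂μ ≤ 1 ∧
      b / β ≤ ∫ t, w t (u t) ∂μ := by
  have hm : 0 < μ.real B := ENNReal.toReal_pos hμB (measure_ne_top μ B)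
  set κ := (β * μ.real B)⁻¹
  have hκ : κ * (β * μ.real B) = 1 := inv_mul_cancel₀ (by positivity)
  refine ⟨B.indicator fun _ ↦ κ • x, (integrable_const (κ • x)).indicator hB, ?_, ?_⟩
  · calc ∫ t, dualNorm (p t) (B.indicator (fun _ ↦ κ • x) t) ∂μ
          ≤ ∫ t, B.indicator (fun _ ↦ κ * β) t ∂μ := by
            refine integral_mono_of_nonneg (ae_of_all _ fun t ↦ dualNorm_nonneg)
              ((integrable_const _).indicator hB) ?_
            filter_upwards [hx] with t ht
            by_cases htB : t ∈ B
            · simp only [indicator_of_mem htB]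
              exact dualNorm_le_of_forall fun v hv ↦ by
                simpa using mul_le_mul_of_nonneg_left ((ht htB).1 v hv) (by positivity)
            · simp only [indicator_of_notMem htB]
              exact dualNorm_le_of_forall fun v _ ↦ by simp
      _ = 1 := by
        rw [integral_indicator_const _ hB, smul_eq_mul]
        linear_combination hκ
  · have hint : Integrable (fun t ↦ x (u t)) μ := (x.comp_memLp' hu).integrable le_top
    calc b / β = κ * ∫ _ in B, b ∂μ := by
          rw [setIntegral_const, smul_eq_mul, div_eq_iff hβ.ne']
          linear_combination (-b) * hκ
      _ ≤ κ * ∫ t in B, x (u t) ∂μ := by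
          refine mul_le_mul_of_nonneg_left ?_ (by positivity)
          refine integral_mono_ae (integrable_const b) hint.integrableOn ?_
          exact (ae_restrict_iff' hB).2 (hx.mono fun t ht htB ↦ (ht htB).2)
      _ = ∫ t, B.indicator (fun _ ↦ κ • x) t (u t) ∂μ := by
          rw [← integral_const_mul, ← integral_indicator hB]
          congr 1 with t
          by_cases htB : t ∈ B <;> simp [htB]

structure IsContinuousNormFamilyOn (p : ℝ → Seminorm ℝ E) (K : Set ℝ) : Prop where
  continuousOn : ContinuousOn (fun q : ℝ × E ↦ p q.1 q.2) (K ×ˢ univ)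
  eq_zero : ∀ t ∈ K, ∀ v, p t v = 0 → v = 0

namespace IsContinuousNormFamilyOn

variable {p : ℝ → Seminorm ℝ E} {K : Set ℝ} {μ : Measure ℝ}

lemma continuous_apply (hp : IsContinuousNormFamilyOn p K) {t : ℝ} (ht : t ∈ K) :
    Continuous (p t) :=
  hp.continuousOn.comp_continuous (continuous_const.prodMk continuous_id) fun _ ↦ ⟨ht, trivial⟩

lemma aestronglyMeasurable_apply (hp : IsContinuousNormFamilyOn p K) (hK : IsCompact K)
    (hμK : ∀ᵐ t ∂μ, t ∈ K) (v : E) : AEStronglyMeasurable (fun t ↦ p t v) μ := by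
  rw [← Measure.restrict_eq_self_of_ae_mem hμK]
  exact (hp.continuousOn.comp (continuous_id.prodMk continuous_const).continuousOn
    fun t ht ↦ ⟨ht, trivial⟩).aestronglyMeasurable hK.measurableSet

variable [FiniteDimensional ℝ E]

lemma exists_uniform_norm_bounds (hp : IsContinuousNormFamilyOn p K) (hK : IsCompact K) :
    ∃ c C, 0 < c ∧ 0 < C ∧ ∀ t ∈ K, ∀ v, c * ‖v‖ ≤ p t v ∧ p t v ≤ C * ‖v‖ := by
  have hS : IsCompact (K ×ˢ Metric.sphere (0 : E) 1) := hK.prod (isCompact_sphere 0 1)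
  have hcont : ContinuousOn (fun q : ℝ × E ↦ p q.1 q.2) (K ×ˢ Metric.sphere (0 : E) 1) :=
    hp.continuousOn.mono (prod_mono subset_rfl (subset_univ _))
  obtain ⟨c, hc, hcle⟩ := hS.exists_forall_le' hcont (a := 0) fun q hq ↦
    (apply_nonneg _ _).lt_of_ne' fun h ↦
      ne_zero_of_mem_unit_sphere ⟨_, hq.2⟩ (hp.eq_zero _ hq.1 _ h)
  obtain ⟨C, hC⟩ := hS.exists_bound_of_continuousOn hcont
  refine ⟨c, max C 1, hc, by positivity, fun t ht v ↦ ?_⟩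
  rcases eq_or_ne v 0 with rfl | hv
  · simp
  have he : (t, ‖v‖⁻¹ • v) ∈ K ×ˢ Metric.sphere (0 : E) 1 := ⟨ht, by simp [norm_smul, hv]⟩
  have hpv : p t v = ‖v‖ * p t (‖v‖⁻¹ • v) := by
    rw [map_smul_eq_mul, norm_inv, norm_norm, mul_inv_cancel_left₀ (norm_ne_zero_iff.2 hv)]
  rw [hpv, mul_comm c, mul_comm (max C 1)]
  exact ⟨by gcongr; exact hcle _ he,
    by gcongr; exact (le_abs_self _).trans ((hC _ he).trans (le_max_left _ _))⟩

lemma aemeasurable_dualNorm (hp : IsContinuousNormFamilyOn p K) (hK : IsCompact K)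
    (hμK : ∀ᵐ t ∂μ, t ∈ K) {w : ℝ → E →L[ℝ] ℝ} (hw : AEStronglyMeasurable w μ) :
    AEMeasurable (fun t ↦ dualNorm (p t) (w t)) μ := by
  obtain ⟨c, _, hc, _, hcC⟩ := hp.exists_uniform_norm_bounds hK
  set vs := TopologicalSpace.denseSeq E
  refine AEMeasurable.congr (f := fun t ↦ ⨆ n, w t ((max (p t (vs n)) 1)⁻¹ • vs n))
    (AEMeasurable.iSup fun n ↦ ?_) ?_
  · have hscale : AEStronglyMeasurable (fun t ↦ (max (p t (vs n)) 1)⁻¹ • vs n) μ :=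
      ((hp.aestronglyMeasurable_apply hK hμK _).aemeasurable.max
        aemeasurable_const).inv.aestronglyMeasurable.smul_const _
    exact (isBoundedBilinearMap_apply.continuous.comp_aestronglyMeasurable
      (hw.prodMk hscale)).aemeasurable
  · filter_upwards [hμK] with t ht
    exact (dualNorm_eq_iSup hc (fun v ↦ (hcC t ht v).1) (hp.continuous_apply ht)
      (TopologicalSpace.denseRange_denseSeq E)).symm

lemma integral_apply_le_essSup (hp : IsContinuousNormFamilyOn p K) (hK : IsCompact K) [NeZero μ]
    (hμK : ∀ᵐ t ∂μ, t ∈ K) {u : ℝ → E} (hu : MemLp u ⊤ μ) {w : ℝ → E →L[ℝ] ℝ}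
    (hw : Integrable w μ) (hw1 : ∫ t, dualNorm (p t) (w t) ∂μ ≤ 1) :
    ∫ t, w t (u t) ∂μ ≤ essSup (fun t ↦ p t (u t)) μ := by
  obtain ⟨c, C, hc, hC, hcC⟩ := hp.exists_uniform_norm_bounds hK
  set M := essSup (fun t ↦ p t (u t)) μ
  have hR := ae_le_lpNorm_exponent_top hu
  have hbdd : IsBoundedUnder (· ≤ ·) (ae μ) fun t ↦ p t (u t) := by
    refine isBoundedUnder_of_eventually_le (a := C * lpNorm u ⊤ μ) ?_
    filter_upwards [hμK, hR] with t ht hRt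
    exact (hcC t ht _).2.trans (by gcongr)
  have hM0 : 0 ≤ M :=
    le_limsup_of_frequently_le (Frequently.of_forall fun t ↦ apply_nonneg _ _) hbdd
  have hD : Integrable (fun t ↦ dualNorm (p t) (w t)) μ := by
    refine (hw.norm.div_const c).mono'
      (hp.aemeasurable_dualNorm hK hμK hw.1).aestronglyMeasurable ?_
    filter_upwards [hμK] with t ht
    rw [Real.norm_of_nonneg dualNorm_nonneg]
    exact dualNorm_le_norm_div hc fun v ↦ (hcC t ht v).1
  have hwu : Integrable (fun t ↦ w t (u t)) μ := by
    refine (hw.norm.mul_const (lpNorm u ⊤ μ)).mono'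
      (isBoundedBilinearMap_apply.continuous.comp_aestronglyMeasurable (hw.1.prodMk hu.1)) ?_
    filter_upwards [hR] with t ht
    exact (w t).le_opNorm_of_le ht
  calc ∫ t, w t (u t) ∂μ ≤ ∫ t, dualNorm (p t) (w t) * M ∂μ := by
        refine integral_mono_ae hwu (hD.mul_const M) ?_
        filter_upwards [hμK, ae_le_essSup hbdd] with t ht hMt
        exact (apply_le_dualNorm_mul hc (fun v ↦ (hcC t ht v).1) _).trans
          (mul_le_mul_of_nonneg_left hMt dualNorm_nonneg)
    _ = (∫ t, dualNorm (p t) (w t) ∂μ) * M := integral_mul_const M _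
    _ ≤ M := mul_le_of_le_one_left hM0 hw1

lemma exists_pos_forall_dist_lt_apply_le_one_add (hp : IsContinuousNormFamilyOn p K)
    (hK : IsCompact K) {η : ℝ} (hη : 0 < η) :
    ∃ δ > 0, ∀ s ∈ K, ∀ t ∈ K, dist t s < δ → ∀ x : E →L[ℝ] ℝ, (∀ v, x v ≤ p s v) →
      ∀ v, p t v ≤ 1 → x v ≤ 1 + η := by
  obtain ⟨c, _, hc, _, hcC⟩ := hp.exists_uniform_norm_bounds hK
  obtain ⟨δ, hδ, hδp⟩ := Metric.uniformContinuousOn_iff.1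
    ((hK.prod (isCompact_closedBall (0 : E) c⁻¹)).uniformContinuousOn_of_continuous
      (hp.continuousOn.mono (prod_mono subset_rfl (subset_univ _)))) η hη
  refine ⟨δ, hδ, fun s hs t ht hst x hx v hv ↦ ?_⟩
  have hvR : v ∈ Metric.closedBall (0 : E) c⁻¹ := by
    simpa using (le_inv_mul_iff₀ hc).2 ((hcC t ht v).1.trans hv)
  have := hδp (s, v) ⟨hs, hvR⟩ (t, v) ⟨ht, hvR⟩ (by simpa [Prod.dist_eq, dist_comm] using hst)
  rw [Real.dist_eq] at this
  linarith [hx v, (abs_lt.1 this).2]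

/- A functional norming `u t₀` for `p t₀` almost norms `u t` for `p t` as long as `(t, u t)` stays
close to `(t₀, u t₀)`; the set `B` is chosen so that this holds throughout it. -/
lemma exists_almost_norming_dual (hp : IsContinuousNormFamilyOn p K) (hK : IsCompact K) [NeZero μ]
    (hμK : ∀ᵐ t ∂μ, t ∈ K) {u : ℝ → E} (hu : AEStronglyMeasurable u μ) {a η : ℝ}
    (ha : a < essSup (fun t ↦ p t (u t)) μ) (hη : 0 < η) :
    ∃ B, MeasurableSet B ∧ μ B ≠ 0 ∧ ∃ x : E →L[ℝ] ℝ,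
      ∀ᵐ t ∂μ, t ∈ B → (∀ v, p t v ≤ 1 → x v ≤ 1 + η) ∧ a - η ≤ x (u t) := by
  borelize E
  obtain ⟨_, C, _, hC, hcC⟩ := hp.exists_uniform_norm_bounds hK
  obtain ⟨δ, hδ, hδx⟩ := hp.exists_pos_forall_dist_lt_apply_le_one_add hK hη
  set g := hu.mk u
  have hg : Measurable g := hu.stronglyMeasurable_mk.measurable
  set A := {t | a < p t (g t)}
  have hA : μ A ≠ 0 := by
    have hug : (fun t ↦ p t (u t)) =ᵐ[μ] fun t ↦ p t (g t) :=
      hu.ae_eq_mk.mono fun t ht ↦ congrArg (p t) ht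
    rw [essSup_congr_ae hug] at ha
    exact frequently_ae_iff.1 <|
      frequently_lt_of_lt_limsup (isCoboundedUnder_le_of_le _ fun t ↦ apply_nonneg _ _) ha
  have : NeZero (μ.restrict A) := ⟨by simpa [Measure.restrict_eq_zero] using hA⟩
  obtain ⟨B, hB, hμB, hBdist⟩ := exists_measurableSet_measure_ne_zero_forall_dist_lt
    (μ := μ.restrict A) (measurable_id.prodMk hg) (lt_min hδ (div_pos hη hC))
  rw [Measure.restrict_apply hB] at hμB
  obtain ⟨t₀, ⟨ht₀B, ht₀A⟩, ht₀K⟩ : (B ∩ A ∩ K).Nonempty :=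
    nonempty_of_measure_ne_zero (by rwa [measure_inter_conull (ae_iff.1 hμK)])
  obtain ⟨x, hx₀, hxp⟩ := (p t₀).exists_dual_le_and_apply_eq (g t₀)
  refine ⟨B, hB, fun h ↦ hμB (measure_mono_null inter_subset_left h), x, ?_⟩
  filter_upwards [hμK, hu.ae_eq_mk] with t ht htg htB
  have hd := hBdist t htB t₀ ht₀B
  simp only [Prod.dist_eq, lt_min_iff, max_lt_iff] at hd
  obtain ⟨⟨hdt, -⟩, -, hdg⟩ := hd
  refine ⟨hδx t₀ ht₀K t ht hdt x hxp, ?_⟩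
  have hsub : x (g t₀ - g t) ≤ η :=
    calc x (g t₀ - g t) ≤ C * ‖g t₀ - g t‖ := (hxp _).trans (hcC t₀ ht₀K _).2
      _ ≤ η := by rw [← dist_eq_norm, dist_comm, mul_comm, ← le_div_iff₀ hC]; exact hdg.le
  rw [map_sub] at hsub
  rw [htg]
  linarith [show a < p t₀ (g t₀) from ht₀A]

theorem essSup_eq_sSup_integral_dualNorm (hp : IsContinuousNormFamilyOn p K) (hK : IsCompact K)
    [IsFiniteMeasure μ] [NeZero μ] (hμK : ∀ᵐ t ∂μ, t ∈ K) {u : ℝ → E} (hu : MemLp u ⊤ μ) :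
    essSup (fun t ↦ p t (u t)) μ = sSup {r : ℝ | ∃ w : ℝ → E →L[ℝ] ℝ, Integrable w μ ∧
      ∫ t, dualNorm (p t) (w t) ∂μ ≤ 1 ∧ r = ∫ t, w t (u t) ∂μ} := by
  set M := essSup (fun t ↦ p t (u t)) μ
  set S := {r : ℝ | ∃ w : ℝ → E →L[ℝ] ℝ, Integrable w μ ∧
      ∫ t, dualNorm (p t) (w t) ∂μ ≤ 1 ∧ r = ∫ t, w t (u t) ∂μ}
  have hupper : ∀ r ∈ S, r ≤ M := by
    rintro _ ⟨w, hw, hw1, rfl⟩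
    exact hp.integral_apply_le_essSup hK hμK hu hw hw1
  have hlower : ∀ a < M, ∀ η > 0, ∃ r ∈ S, (a - η) / (1 + η) ≤ r := by
    intro a ha η hη
    obtain ⟨B, hB, hμB, x, hx⟩ := hp.exists_almost_norming_dual hK hμK hu.1 ha hη
    obtain ⟨w, hw, hw1, hwu⟩ := exists_integral_dualNorm_le_one hu hB hμB (by positivity) hx
    exact ⟨_, ⟨w, hw, hw1, rfl⟩, hwu⟩
  obtain ⟨r₀, hr₀, -⟩ := hlower (M - 1) (by linarith) 1 one_pos
  refine le_antisymm (le_of_forall_lt_imp_le_of_dense fun a ha ↦ ?_) (csSup_le ⟨r₀, hr₀⟩ hupper)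
  have hlim : Tendsto (fun η ↦ (a - η) / (1 + η)) (𝓝[>] 0) (𝓝 a) := by
    have : ContinuousAt (fun η : ℝ ↦ (a - η) / (1 + η)) 0 := by fun_prop (disch := norm_num)
    simpa using this.tendsto.mono_left nhdsWithin_le_nhds
  refine le_of_tendsto hlim (eventually_nhdsWithin_of_forall fun η hη ↦ ?_)
  obtain ⟨r, hr, hle⟩ := hlower a ha η hη
  exact hle.trans (le_csSup ⟨M, hupper⟩ hr)

end IsContinuousNormFamilyOn

end

theorem stmt_3_general {E : Type*} [NormedAddCommGroup E] [NormedSpace ℝ E] [FiniteDimensional ℝ E]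
    (N : ℝ → E → ℝ)
    (hNc : ContinuousOn (Function.uncurry N) (Set.Icc 0 1 ×ˢ Set.univ))
    (hNeq : ∀ t ∈ Set.Icc (0:ℝ) 1, ∀ v : E, N t v = 0 ↔ v = 0)
    (hNsmul : ∀ t ∈ Set.Icc (0:ℝ) 1, ∀ (c : ℝ) (v : E), N t (c • v) = |c| * N t v)
    (hNadd : ∀ t ∈ Set.Icc (0:ℝ) 1, ∀ v w : E, N t (v + w) ≤ N t v + N t w)
    (u : ℝ → E)
    (hu : MemLp u ⊤ (volume.restrict (Set.Icc (0:ℝ) 1))) :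
    essSup (fun t => N t (u t)) (volume.restrict (Set.Icc (0:ℝ) 1)) =
      sSup { r : ℝ | ∃ w : ℝ → E →L[ℝ] ℝ, IntegrableOn w (Set.Icc 0 1) volume ∧
        (∫ t in Set.Icc (0:ℝ) 1, sSup { a : ℝ | ∃ v : E, N t v ≤ 1 ∧ a = w t v }) ≤ 1 ∧
        r = ∫ t in Set.Icc (0:ℝ) 1, w t (u t) } := by
  let P : ℝ → Seminorm ℝ E := fun t ↦ if ht : t ∈ Icc 0 1 then
    Seminorm.of (N t) (hNadd t ht) fun a v ↦ by rw [hNsmul t ht, Real.norm_eq_abs] else 0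
  have hPN : ∀ t ∈ Icc (0 : ℝ) 1, ⇑(P t) = N t := fun t ht ↦ by simp only [P, dif_pos ht]; rfl
  have hP : IsContinuousNormFamilyOn P (Icc 0 1) :=
    ⟨hNc.congr fun q hq ↦ congrFun (hPN q.1 hq.1) q.2,
      fun t ht v h ↦ (hNeq t ht v).1 (by rwa [hPN t ht] at h)⟩
  have : IsProbabilityMeasure (volume.restrict (Icc (0 : ℝ) 1)) := ⟨by simp⟩
  have hμK : ∀ᵐ t ∂volume.restrict (Icc (0 : ℝ) 1), t ∈ Icc 0 1 := ae_restrict_mem measurableSet_Icc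
  have hD (w : ℝ → E →L[ℝ] ℝ) : ∫ t in Icc 0 1, dualNorm (P t) (w t) =
      ∫ t in Icc (0 : ℝ) 1, sSup {a | ∃ v, N t v ≤ 1 ∧ a = w t v} :=
    integral_congr_ae (hμK.mono fun t ht ↦ by simp only [dualNorm, hPN t ht])
  rw [essSup_congr_ae (hμK.mono fun t ht ↦ (congrFun (hPN t ht) (u t)).symm),
    hP.essSup_eq_sSup_integral_dualNorm isCompact_Icc hμK hu]
  simp only [hD, IntegrableOn]

/-- For a continuous family of norms `N_t` on a finite-dimensional Banach
space `𝔼` and `u ∈ L^∞([0,1]; 𝔼)`,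
`ess sup_t N_t(u(t)) = sup { ∫₀¹ ⟨w(t)|u(t)⟩ dt : w ∈ L¹([0,1]; 𝔼*), ∫₀¹ N_t*(w(t)) dt ≤ 1 }`,
where `N_t*(x) = sup { x(v) : N_t(v) ≤ 1 }` is the dual norm. -/
theorem stmt_3 {E : Type*} [NormedAddCommGroup E] [NormedSpace ℝ E] [FiniteDimensional ℝ E]
    (N : ℝ → E → ℝ)
    (hNc : ContinuousOn (Function.uncurry N) (Set.Icc 0 1 ×ˢ Set.univ))
    (hN0 : ∀ t ∈ Set.Icc (0:ℝ) 1, ∀ v : E, 0 ≤ N t v)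
    (hNeq : ∀ t ∈ Set.Icc (0:ℝ) 1, ∀ v : E, N t v = 0 ↔ v = 0)
    (hNsmul : ∀ t ∈ Set.Icc (0:ℝ) 1, ∀ (c : ℝ) (v : E), N t (c • v) = |c| * N t v)
    (hNadd : ∀ t ∈ Set.Icc (0:ℝ) 1, ∀ v w : E, N t (v + w) ≤ N t v + N t w)
    (u : ℝ → E)
    (hu : MemLp u ⊤ (volume.restrict (Set.Icc (0:ℝ) 1))) :
    essSup (fun t => N t (u t)) (volume.restrict (Set.Icc (0:ℝ) 1)) =
      sSup { r : ℝ | ∃ w : ℝ → E →L[ℝ] ℝ, IntegrableOn w (Set.Icc 0 1) volume ∧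
        (∫ t in Set.Icc (0:ℝ) 1, sSup { a : ℝ | ∃ v : E, N t v ≤ 1 ∧ a = w t v }) ≤ 1 ∧
        r = ∫ t in Set.Icc (0:ℝ) 1, w t (u t) } :=
  stmt_3_general N hNc hNeq hNsmul hNadd u hu
end

section
/- Let Z := {(t, π(t,w)) : t ∈ [0,1], w ∈ 𝔼₁} ⊆ [0,1] × 𝔼₂, where π : [0,1] × 𝔼₁ → 𝔼₂ is continuous and linear in the second variable, and let N : [0,1] × 𝔼₁ → [0,∞) be a continuous family of norms on the finite-dimensional space 𝔼₁. Define S : Z → [0,∞) by S(t,v) := min{ N(t,w) : π(t,w) = v }. Then S is lower semicontinuous on Z. -/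
/-!
Compactness does all the work. On `[0,1] × 𝔼₁` the norms `N t` are uniformly comparable to `‖·‖`
(minimise `N` over `[0,1] × sphere`), so every sublevel set `{(t,w) : N(t,w) ≤ r}` is compact.
Its image under `(t,w) ↦ (t, π(t,w))` is therefore closed; a point with `S > r'` lies outside
this closed image, hence so do nearby points of `Z`, and there `S ≥ r'`.
-/

open Set Filter Topology Function Metric

theorem LowerSemicontinuousOn.congr {α β : Type*} [TopologicalSpace α] [Preorder β]
    {f g : α → β} {s : Set α} (h : LowerSemicontinuousOn f s) (hfg : EqOn f g s) :
    LowerSemicontinuousOn g s := fun x hx y hy => by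
  filter_upwards [h x hx y ((hfg hx).symm ▸ hy : y < f x), self_mem_nhdsWithin] with z hz hzs
  rwa [← hfg hzs]

theorem lowerSemicontinuousOn_sInf_image_fiber {X Y : Type*} [TopologicalSpace X]
    [TopologicalSpace Y] [T2Space Y] {f : X → ℝ} {g : X → Y} {s : Set X}
    (hg : ContinuousOn g s) (hf : BddBelow (f '' s))
    (hsub : ∀ r, IsCompact {x ∈ s | f x ≤ r}) :
    LowerSemicontinuousOn (fun y => sInf (f '' {x ∈ s | g x = y})) (g '' s) := by
  rintro _ ⟨x₀, -, rfl⟩ r hr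
  obtain ⟨r', hrr', hr'⟩ := exists_between hr
  have hK : IsClosed (g '' {x ∈ s | f x ≤ r'}) :=
    ((hsub r').image_of_continuousOn (hg.mono fun _ hx => hx.1)).isClosed
  have hx₀ : g x₀ ∉ g '' {x ∈ s | f x ≤ r'} := by
    rintro ⟨x, ⟨hxs, hxr⟩, hgx⟩
    have : sInf (f '' {x ∈ s | g x = g x₀}) ≤ f x :=
      csInf_le (hf.mono (image_mono fun _ h => h.1)) ⟨x, ⟨hxs, hgx⟩, rfl⟩
    linarith
  filter_upwards [mem_nhdsWithin_of_mem_nhds (hK.isOpen_compl.mem_nhds hx₀), self_mem_nhdsWithin]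
    with y hyK ⟨x₁, hx₁, hgx₁⟩
  refine hrr'.trans_le (le_csInf ⟨f x₁, x₁, ⟨hx₁, hgx₁⟩, rfl⟩ ?_)
  rintro _ ⟨x, ⟨hxs, rfl⟩, rfl⟩
  exact (not_le.1 fun hxr => hyK ⟨x, ⟨hxs, hxr⟩, rfl⟩).le

theorem exists_pos_mul_norm_le {T E : Type*} [TopologicalSpace T] [NormedAddCommGroup E]
    [NormedSpace ℝ E] [ProperSpace E] {K : Set T} (hK : IsCompact K) {N : T → E → ℝ}
    (hNc : ContinuousOn (uncurry N) (K ×ˢ univ)) (hpos : ∀ t ∈ K, ∀ w ≠ 0, 0 < N t w)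
    (hsmul : ∀ t ∈ K, ∀ a : ℝ, 0 ≤ a → ∀ w, N t (a • w) = a * N t w) :
    ∃ c > 0, ∀ t ∈ K, ∀ w, c * ‖w‖ ≤ N t w := by
  obtain ⟨c, hc, hcN⟩ := (hK.prod (isCompact_sphere (0 : E) 1)).exists_forall_le'
    (hNc.mono (prod_mono_right (subset_univ _)))
    fun x hx => hpos x.1 hx.1 x.2 (ne_of_mem_sphere hx.2 one_ne_zero)
  refine ⟨c, hc, fun t ht w => ?_⟩
  rcases eq_or_ne w 0 with rfl | hw
  · simp [show N t 0 = 0 by simpa using hsmul t ht 0 le_rfl 0]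
  have hw' : 0 < ‖w‖ := norm_pos_iff.2 hw
  have hu : ‖w‖⁻¹ • w ∈ sphere (0 : E) 1 := by
    simp [norm_smul, hw'.ne']
  calc c * ‖w‖ ≤ N t (‖w‖⁻¹ • w) * ‖w‖ :=
        mul_le_mul_of_nonneg_right (hcN (t, _) ⟨ht, hu⟩) hw'.le
    _ = N t w := by
        rw [mul_comm, ← hsmul t ht _ hw'.le, smul_smul, mul_inv_cancel₀ hw'.ne', one_smul]

theorem isCompact_sublevel_of_mul_norm_le {T E : Type*} [TopologicalSpace T] [T2Space T]
    [NormedAddCommGroup E] [ProperSpace E] {K : Set T} (hK : IsCompact K) {N : T → E → ℝ}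
    (hNc : ContinuousOn (uncurry N) (K ×ˢ univ)) {c : ℝ} (hc : 0 < c)
    (hcN : ∀ t ∈ K, ∀ w, c * ‖w‖ ≤ N t w) (r : ℝ) :
    IsCompact {x ∈ K ×ˢ univ | uncurry N x ≤ r} :=
  (hK.prod (isCompact_closedBall 0 (r / c))).of_isClosed_subset
    (hNc.preimage_isClosed_of_isClosed (hK.isClosed.prod isClosed_univ) isClosed_Iic)
    fun x ⟨⟨ht, _⟩, hr⟩ => ⟨ht, by
      rw [mem_closedBall_zero_iff, le_div_iff₀ hc, mul_comm]
      exact (hcN _ ht x.2).trans hr⟩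

theorem stmt_8_general {E1 E2 : Type*}
    [NormedAddCommGroup E1] [NormedSpace ℝ E1] [FiniteDimensional ℝ E1]
    [NormedAddCommGroup E2] [NormedSpace ℝ E2]
    (N : ℝ → E1 → ℝ)
    (hNc : ContinuousOn (Function.uncurry N) (Set.Icc 0 1 ×ˢ Set.univ))
    (hN0 : ∀ t ∈ Set.Icc (0:ℝ) 1, ∀ v : E1, 0 ≤ N t v)
    (hNeq : ∀ t ∈ Set.Icc (0:ℝ) 1, ∀ v : E1, N t v = 0 ↔ v = 0)
    (hNsmul : ∀ t ∈ Set.Icc (0:ℝ) 1, ∀ (c : ℝ) (v : E1), N t (c • v) = |c| * N t v)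
    (π : ℝ → E1 →ₗ[ℝ] E2)
    (hπc : ContinuousOn (fun p : ℝ × E1 => π p.1 p.2) (Set.Icc 0 1 ×ˢ Set.univ)) :
    LowerSemicontinuousOn
      (fun p : ℝ × E2 => sInf { r : ℝ | ∃ z : E1, π p.1 z = p.2 ∧ r = N p.1 z })
      { p : ℝ × E2 | p.1 ∈ Set.Icc (0:ℝ) 1 ∧ ∃ z : E1, π p.1 z = p.2 } := by
  obtain ⟨c, hc, hcN⟩ := exists_pos_mul_norm_le isCompact_Icc hNc
    (fun t ht w hw => (hN0 t ht w).lt_of_ne' (mt (hNeq t ht w).1 hw))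
    (fun t ht a ha w => by rw [hNsmul t ht, abs_of_nonneg ha])
  have key := lowerSemicontinuousOn_sInf_image_fiber (g := fun x : ℝ × E1 => (x.1, π x.1 x.2))
    (continuousOn_fst.prodMk hπc) ⟨0, by rintro _ ⟨x, hx, rfl⟩; exact hN0 x.1 hx.1 x.2⟩
    (isCompact_sublevel_of_mul_norm_le isCompact_Icc hNc hc hcN)
  have hZ : (fun x : ℝ × E1 => (x.1, π x.1 x.2)) '' (Icc 0 1 ×ˢ univ) =
      {p : ℝ × E2 | p.1 ∈ Icc (0:ℝ) 1 ∧ ∃ z : E1, π p.1 z = p.2} := by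
    ext ⟨t, v⟩
    simp [Prod.ext_iff]
  rw [hZ] at key
  refine key.congr ?_
  rintro ⟨t, v⟩ ⟨ht, -⟩
  dsimp only
  refine congrArg sInf (ext fun r => ?_)
  constructor
  · rintro ⟨⟨t', w⟩, ⟨-, hg⟩, rfl⟩
    obtain ⟨rfl, rfl⟩ := Prod.ext_iff.1 hg
    exact ⟨w, rfl, rfl⟩
  · rintro ⟨w, rfl, rfl⟩
    exact ⟨(t, w), ⟨⟨ht, trivial⟩, rfl⟩, rfl⟩

/-- On `Z = {(t, π(t,w)) : t ∈ [0,1], w ∈ 𝔼₁}`, the minimal-norm function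
`S(t,v) = min { N(t,w) : π(t,w) = v }` is lower semicontinuous. -/
theorem stmt_8 {E1 E2 : Type*}
    [NormedAddCommGroup E1] [NormedSpace ℝ E1] [FiniteDimensional ℝ E1]
    [NormedAddCommGroup E2] [NormedSpace ℝ E2] [FiniteDimensional ℝ E2]
    (N : ℝ → E1 → ℝ)
    (hNc : ContinuousOn (Function.uncurry N) (Set.Icc 0 1 ×ˢ Set.univ))
    (hN0 : ∀ t ∈ Set.Icc (0:ℝ) 1, ∀ v : E1, 0 ≤ N t v)
    (hNeq : ∀ t ∈ Set.Icc (0:ℝ) 1, ∀ v : E1, N t v = 0 ↔ v = 0)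
    (hNsmul : ∀ t ∈ Set.Icc (0:ℝ) 1, ∀ (c : ℝ) (v : E1), N t (c • v) = |c| * N t v)
    (hNadd : ∀ t ∈ Set.Icc (0:ℝ) 1, ∀ v w : E1, N t (v + w) ≤ N t v + N t w)
    (π : ℝ → E1 →ₗ[ℝ] E2)
    (hπc : ContinuousOn (fun p : ℝ × E1 => π p.1 p.2) (Set.Icc 0 1 ×ˢ Set.univ)) :
    LowerSemicontinuousOn
      (fun p : ℝ × E2 => sInf { r : ℝ | ∃ z : E1, π p.1 z = p.2 ∧ r = N p.1 z })
      { p : ℝ × E2 | p.1 ∈ Set.Icc (0:ℝ) 1 ∧ ∃ z : E1, π p.1 z = p.2 } :=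
  stmt_8_general N hNc hN0 hNeq hNsmul π hπc
end
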